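/- Let 0 < β < 1. There exists a constant C > 0 such that for all real numbers x, y, one has ||x+y|^{1+β} − |x|^{1+β} − |y|^{1+β}| ≤ C(|x||y|^β + |x|^β|y|). -/
import Mathlib


open Real

private lemma rpow_subadd (β u w : ℝ) (hβ : 0 ≤ β) (hβ1 : β ≤ 1)
    (hu : 0 ≤ u) (hw : 0 ≤ w) : (u + w) ^ β ≤ u ^ β + w ^ β := by
  have h := NNReal.rpow_add_le_add_rpow (u.toNNReal) (w.toNNReal) hβ hβ1
  rw [← Real.toNNReal_add hu hw] at h
  have h2 : (((u + w).toNNReal : ℝ)) ^ β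
      ≤ ((u.toNNReal : ℝ)) ^ β + ((w.toNNReal : ℝ)) ^ β := by exact_mod_cast h
  rwa [Real.coe_toNNReal _ (add_nonneg hu hw), Real.coe_toNNReal _ hu,
    Real.coe_toNNReal _ hw] at h2

private lemma rpow_diff (β u v : ℝ) (hβ : 0 ≤ β) (hβ1 : β ≤ 1)
    (hu : 0 ≤ u) (huv : u ≤ v) :
    v ^ (1 + β) - u ^ (1 + β) ≤ (v - u) * v ^ β + u * (v - u) ^ β := by
  have hv : 0 ≤ v := hu.trans huv
  have h1 : v ^ (1 + β) = v * v ^ β := by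
    rw [Real.rpow_add' hv (by positivity), Real.rpow_one]
  have h2 : u ^ (1 + β) = u * u ^ β := by
    rw [Real.rpow_add' hu (by positivity), Real.rpow_one]
  have hsub : v ^ β ≤ (v - u) ^ β + u ^ β := by
    have := rpow_subadd β (v - u) u hβ hβ1 (by linarith) hu
    rwa [sub_add_cancel] at this
  have hub : u * v ^ β ≤ u * ((v - u) ^ β + u ^ β) :=
    mul_le_mul_of_nonneg_left hsub hu
  rw [h1, h2]
  nlinarith [Real.rpow_nonneg hv β, Real.rpow_nonneg hu β,
    Real.rpow_nonneg (show (0:ℝ) ≤ v - u by linarith) β]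

private lemma key_bound (β a b s : ℝ) (hβ : 0 < β) (hβ1 : β < 1)
    (hb : 0 ≤ b) (hba : b ≤ a) (hs1 : a - b ≤ s) (hs2 : s ≤ a + b) :
    |s ^ (1 + β) - a ^ (1 + β) - b ^ (1 + β)| ≤ 3 * (a * b ^ β + a ^ β * b) := by
  have ha : 0 ≤ a := hb.trans hba
  have hs : 0 ≤ s := le_trans (by linarith) hs1
  have hbβa : b ^ β ≤ a ^ β := Real.rpow_le_rpow hb hba hβ.le
  have hbpb : b ^ (1 + β) = b * b ^ β := by
    rw [Real.rpow_add' hb (by positivity), Real.rpow_one]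
  have hbp_le : b ^ (1 + β) ≤ a ^ β * b := by
    rw [hbpb]; nlinarith [Real.rpow_nonneg hb β]
  have hbp_nonneg : 0 ≤ b ^ (1 + β) := Real.rpow_nonneg hb _
  have hRHS : 0 ≤ a * b ^ β + a ^ β * b := by positivity
  have hab1 : 0 ≤ a * b ^ β := by positivity
  have hab2 : 0 ≤ a ^ β * b := by positivity
  rcases le_total a s with h | h
  · -- a ≤ s
    have hd := rpow_diff β a s hβ.le hβ1.le ha h
    have h1 : (s - a) * s ^ β ≤ b * (a ^ β + b ^ β) := by
      have hsa : s - a ≤ b := by linarith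
      have hsβ : s ^ β ≤ a ^ β + b ^ β := by
        calc s ^ β ≤ (a + b) ^ β := Real.rpow_le_rpow hs hs2 hβ.le
        _ ≤ a ^ β + b ^ β := rpow_subadd β a b hβ.le hβ1.le ha hb
      have := mul_le_mul hsa hsβ (Real.rpow_nonneg hs β) hb
      linarith
    have h2 : a * (s - a) ^ β ≤ a * b ^ β := by
      apply mul_le_mul_of_nonneg_left _ ha
      exact Real.rpow_le_rpow (by linarith) (by linarith) hβ.le
    have hmono : a ^ (1 + β) ≤ s ^ (1 + β) :=
      Real.rpow_le_rpow ha h (by linarith)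
    rw [abs_le]
    constructor
    · nlinarith
    · nlinarith [Real.rpow_nonneg hb β]
  · -- s ≤ a
    have hd := rpow_diff β s a hβ.le hβ1.le hs h
    have h1 : (a - s) * a ^ β ≤ b * a ^ β := by
      apply mul_le_mul_of_nonneg_right (by linarith) (Real.rpow_nonneg ha β)
    have h2 : s * (a - s) ^ β ≤ a * b ^ β := by
      apply mul_le_mul h (Real.rpow_le_rpow (by linarith) (by linarith) hβ.le)
        (Real.rpow_nonneg (by linarith) β) ha
    have hmono : s ^ (1 + β) ≤ a ^ (1 + β) :=
      Real.rpow_le_rpow hs h (by linarith)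
    rw [abs_le]
    constructor
    · nlinarith
    · nlinarith

theorem stmt_0 (β : ℝ) (hβ : 0 < β) (hβ1 : β < 1) :
    ∃ C > (0:ℝ), ∀ x y : ℝ,
      |(|x + y| ^ (1 + β) - |x| ^ (1 + β) - |y| ^ (1 + β))|
        ≤ C * (|x| * |y| ^ β + |x| ^ β * |y|) := by
  refine ⟨3, by norm_num, fun x y => ?_⟩
  rcases le_total |y| |x| with h | h
  · have := key_bound β |x| |y| |x + y| hβ hβ1 (abs_nonneg y) h
      (by have := abs_add_le (x + y) (-y); simp at this; linarith)
      (abs_add_le x y)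
    calc |(|x + y| ^ (1 + β) - |x| ^ (1 + β) - |y| ^ (1 + β))|
        ≤ 3 * (|x| * |y| ^ β + |x| ^ β * |y|) := by
          have heq : |(|x + y| ^ (1 + β) - |x| ^ (1 + β) - |y| ^ (1 + β))|
              = |(|x + y| ^ (1 + β) - |x| ^ (1 + β) - |y| ^ (1 + β))| := rfl
          exact this
      _ = 3 * (|x| * |y| ^ β + |x| ^ β * |y|) := rfl
  · have := key_bound β |y| |x| |x + y| hβ hβ1 (abs_nonneg x) h
      (by have := abs_add_le (x + y) (-x); simp at this; linarith)
      (by rw [add_comm]; exact abs_add_le y x)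
    calc |(|x + y| ^ (1 + β) - |x| ^ (1 + β) - |y| ^ (1 + β))|
        = |(|x + y| ^ (1 + β) - |y| ^ (1 + β) - |x| ^ (1 + β))| := by ring_nf
      _ ≤ 3 * (|y| * |x| ^ β + |y| ^ β * |x|) := this
      _ = 3 * (|x| * |y| ^ β + |x| ^ β * |y|) := by ring
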